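/- arXiv:1101.0138 — 4 statements merged into one kernel-verified Lean document; each statement's English description precedes it below -/
import Mathlib

section
/- Let ϱ : ℝ × [0,∞) → ℝ be a shrinkage rule with exponent ρ ∈ [1/2, ∞), i.e., there are constants C₁, C₂, D > 0 with |x − ϱ(x,α)| ≤ C₁ · min(|x|, α) for all α ≥ 0, x ∈ ℝ, and |ϱ(x,α)| ≤ C₂ |x| (|x|/α)^ρ whenever α > 0 and |x| ≤ Dα. Set q = 1/ρ ∈ (0, 2]. Let {f_n}_{n∈ℕ} and {f̃_n}_{n∈ℕ} be a bi-frame for a separable Hilbert space H with synthesis operator F and dual analysis operator F̃*, let L : H → H′ be a bounded linear operator between Hilbert spaces admitting a bounded pseudo-inverse L^# (i.e., L L^# L = L), let (α_n) be nonnegative weights, and assume the operator F̃* L^# L F is bounded on ℓ_q^{(α_n)}, i.e., there is M with ∑_n α_n |(F̃* L^# L F ω)_n|^q ≤ M ∑_n α_n |ω_n|^q for all ω. Then there exists a constant C > 0 such that for every h in the range of L and every g ∈ H, J_q(h, ĝ) ≤ C · J_q(h, g), where J_q(h,g) = ‖h − Lg‖²_{H′} + ∑_n α_n |⟨g, f̃_n⟩|^q,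 v = F̃* L^# h, and ĝ = L^# L F applied to the sequence (ϱ(v_n, α_n |v_n|^{q−1}))_n (with the convention that this entry is 0 when v_n = 0). -/
open scoped RealInnerProductSpace ENNReal

noncomputable section

/-- The weighted `ℓ_q` penalty `∑_n α_n |w_n|^q` of a (real) sequence `w`, valued in `ℝ≥0∞`,
with the convention `0^0 = 0`. -/
def wpen (α : ℕ → ℝ) (q : ℝ) (w : ℕ → ℝ) : ℝ≥0∞ :=
  ∑' n, ENNReal.ofReal (α n * (if w n = 0 then 0 else |w n| ^ q))

lemma wpen_eq' (α : ℕ → ℝ) (q : ℝ) (hq0 : q ≠ 0) (w : ℕ → ℝ) :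
    (∑' n, ENNReal.ofReal (α n * (if w n = 0 then 0 else |w n| ^ q)))
      = ∑' n, ENNReal.ofReal (α n * |w n| ^ q) := by
  congr 1
  funext n
  by_cases h : w n = 0 <;> simp [h, Real.zero_rpow hq0]

lemma lp2_ofReal_sq (x : lp (fun _ : ℕ => ℝ) 2) :
    ENNReal.ofReal (‖x‖ ^ 2) = ∑' n, ENNReal.ofReal (((x : ∀ _ : ℕ, ℝ) n) ^ 2) := by
  have hp : 0 < (2 : ℝ≥0∞).toReal := by norm_num
  have hnorm := lp.norm_rpow_eq_tsum hp x
  have h2 : ((2 : ℝ≥0∞)).toReal = ((2:ℕ) : ℝ) := by norm_num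
  have hcv : ∀ r : ℝ, ‖r‖ ^ ((2 : ℝ≥0∞)).toReal = r ^ 2 := by
    intro r
    rw [h2, Real.rpow_natCast, Real.norm_eq_abs, sq_abs]
  have hsum : Summable fun n => ((x : ∀ _ : ℕ, ℝ) n) ^ 2 := by
    have := (lp.memℓp x).summable hp
    simpa only [hcv] using this
  have hns : ‖x‖ ^ (2:ℕ) = ∑' n, ((x : ∀ _ : ℕ, ℝ) n) ^ 2 := by
    rw [← Real.rpow_natCast ‖x‖ 2, ← h2, hnorm]
    congr 1
    funext n
    exact hcv _
  rw [hns, ENNReal.ofReal_tsum_of_nonneg (fun n => sq_nonneg _) hsum]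

set_option maxHeartbeats 2000000 in
/-- Core pointwise shrinkage lemma. -/
lemma shrink_pointwise
    (ϱ : ℝ → ℝ → ℝ) (ρ : ℝ) (hρ : 1 / 2 ≤ ρ)
    (C₁ C₂ D : ℝ) (hC₁ : 0 < C₁) (hC₂ : 0 < C₂) (hD : 0 < D)
    (hrule₁ : ∀ (x a : ℝ), 0 ≤ a → |x - ϱ x a| ≤ C₁ * min |x| a)
    (hrule₂ : ∀ (x a : ℝ), 0 < a → |x| ≤ D * a → |ϱ x a| ≤ C₂ * |x| * (|x| / a) ^ ρ)
    (q : ℝ) (hq : q = 1 / ρ)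
    (v x a : ℝ) (ha : 0 ≤ a) :
    (v - (if v = 0 then 0 else ϱ v (a * |v| ^ (q - 1)))) ^ 2
        + a * |if v = 0 then 0 else ϱ v (a * |v| ^ (q - 1))| ^ q
      ≤ (4 * (C₁ ^ 2 + C₂ ^ q + (1 + C₁) ^ q * (1 + 1 / D))) *
          ((v - x) ^ 2 + a * |x| ^ q) := by
  have hρ0 : 0 < ρ := lt_of_lt_of_le (by norm_num) hρ
  have hq0 : 0 < q := by rw [hq]; positivity
  have hq2 : q ≤ 2 := by
    rw [hq, div_le_iff₀ hρ0]; linarith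
  have hρq : ρ * q = 1 := by rw [hq]; field_simp
  have hK' : 0 < C₁ ^ 2 + C₂ ^ q + (1 + C₁) ^ q * (1 + 1 / D) := by positivity
  have hRHS : 0 ≤ (v - x) ^ 2 + a * |x| ^ q := by positivity
  by_cases hv : v = 0
  · simp only [hv, if_pos, abs_zero, Real.zero_rpow hq0.ne', sub_zero, mul_zero, add_zero]
    norm_num
    positivity
  · simp only [if_neg hv]
    set t : ℝ := a * |v| ^ (q - 1) with htdef
    set w : ℝ := ϱ v t with hwdef
    have hv0 : 0 < |v| := abs_pos.2 hv
    have ht0 : 0 ≤ t := by positivity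
    have h1 : |v - w| ≤ C₁ * min |v| t := hrule₁ v t ht0
    rcases eq_or_lt_of_le ha with haz | ha'
    · -- a = 0
      have ht : t = 0 := by rw [htdef, ← haz, zero_mul]
      have h2 : |v - w| ≤ 0 := by
        have h3 := h1
        rw [ht, min_eq_right (abs_nonneg v)] at h3
        simpa using h3
      have hvw : v - w = 0 :=
        abs_eq_zero.mp (le_antisymm h2 (abs_nonneg _))
      rw [hvw, ← haz]
      norm_num
      positivity
    · -- a > 0
      have ht : 0 < t := by
        rw [htdef]; positivity
      have hvt : |v| * t = a * |v| ^ q := by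
        rw [htdef, show |v| * (a * |v| ^ (q - 1)) = a * (|v| ^ (1:ℝ) * |v| ^ (q - 1)) by
          rw [Real.rpow_one]; ring, ← Real.rpow_add hv0]
        norm_num
      have hw_le : |w| ≤ (1 + C₁) * |v| := by
        have h2 : |w| ≤ |v| + |v - w| := by
          have h3 := abs_sub_abs_le_abs_sub w v
          have h4 := abs_sub_comm w v
          linarith
        have h4 : C₁ * min |v| t ≤ C₁ * |v| :=
          mul_le_mul_of_nonneg_left (min_le_left _ _) hC₁.le
        linarith
      set m : ℝ := min (v ^ 2) (a * |v| ^ q) with hmdef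
      have hm0 : 0 ≤ m := le_min (sq_nonneg v) (by positivity)
      have sq1 : (v - w) ^ 2 ≤ C₁ ^ 2 * m := by
        have e1 : (v - w) ^ 2 = |v - w| ^ 2 := (sq_abs _).symm
        have e2 : |v - w| ^ 2 ≤ (C₁ * min |v| t) ^ 2 :=
          pow_le_pow_left₀ (abs_nonneg _) h1 2
        have e3 : (min |v| t) ^ 2 ≤ v ^ 2 := by
          have h5 : min |v| t ≤ |v| := min_le_left _ _
          have h6 : 0 ≤ min |v| t := le_min hv0.le ht0
          calc (min |v| t) ^ 2 ≤ |v| ^ 2 := pow_le_pow_left₀ h6 h5 2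
            _ = v ^ 2 := sq_abs v
        have e4 : (min |v| t) ^ 2 ≤ a * |v| ^ q := by
          have h5 : min |v| t ≤ |v| := min_le_left _ _
          have h6 : min |v| t ≤ t := min_le_right _ _
          have h7 : 0 ≤ min |v| t := le_min hv0.le ht0
          calc (min |v| t) ^ 2 ≤ |v| * t := by nlinarith
            _ = a * |v| ^ q := hvt
        have e5 : (min |v| t) ^ 2 ≤ m := le_min e3 e4
        calc (v - w) ^ 2 = |v - w| ^ 2 := e1
          _ ≤ (C₁ * min |v| t) ^ 2 := e2
          _ = C₁ ^ 2 * (min |v| t) ^ 2 := by ring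
          _ ≤ C₁ ^ 2 * m := mul_le_mul_of_nonneg_left e5 (sq_nonneg C₁)
      have bound_gen : a * |w| ^ q ≤ (1 + C₁) ^ q * (a * |v| ^ q) := by
        have h5 : |w| ^ q ≤ ((1 + C₁) * |v|) ^ q :=
          Real.rpow_le_rpow (abs_nonneg w) hw_le hq0.le
        have h6 : ((1 + C₁) * |v|) ^ q = (1 + C₁) ^ q * |v| ^ q :=
          Real.mul_rpow (by positivity) (abs_nonneg v)
        calc a * |w| ^ q ≤ a * ((1 + C₁) ^ q * |v| ^ q) := by
              rw [← h6]; exact mul_le_mul_of_nonneg_left h5 ha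
          _ = (1 + C₁) ^ q * (a * |v| ^ q) := by ring
      have hpen : a * |w| ^ q ≤ (C₂ ^ q + (1 + C₁) ^ q * (1 + 1 / D)) * m := by
        have hP : 0 ≤ a * |v| ^ q := mul_nonneg ha (Real.rpow_nonneg (abs_nonneg v) q)
        have h7 : (1:ℝ) ≤ 1 + 1 / D := by
          have : 0 < 1 / D := by positivity
          linarith
        have h8 : 0 < (1 + C₁) ^ q := Real.rpow_pos_of_pos (by linarith) q
        have h9 : 0 < C₂ ^ q := Real.rpow_pos_of_pos hC₂ q
        rcases le_or_gt (a * |v| ^ q) (v ^ 2) with hle | hlt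
        · have hm : m = a * |v| ^ q := min_eq_right hle
          rw [hm]
          have h10 : 0 ≤ C₂ ^ q * (a * |v| ^ q) := mul_nonneg h9.le hP
          have h11 : (1 + C₁) ^ q * (a * |v| ^ q)
              ≤ (1 + C₁) ^ q * (1 + 1 / D) * (a * |v| ^ q) :=
            mul_le_mul_of_nonneg_right (le_mul_of_one_le_right h8.le h7) hP
          nlinarith [bound_gen]
        · have hm : m = v ^ 2 := min_eq_left hlt.le
          have hvlt : |v| < t := by
            by_contra hcon
            push_neg at hcon
            have : |v| * t ≤ |v| * |v| :=
              mul_le_mul_of_nonneg_left hcon hv0.le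
            rw [hvt] at this
            linarith [sq_abs v]
          have h9 : 0 ≤ C₂ ^ q := (Real.rpow_pos_of_pos hC₂ q).le
          have h8 : 0 < (1 + C₁) ^ q := Real.rpow_pos_of_pos (by linarith) q
          rcases le_or_gt |v| (D * t) with hDt | hDt
          · -- use rule 2
            have h2 := hrule₂ v t ht hDt
            have hrhs0 : 0 ≤ C₂ * |v| * (|v| / t) ^ ρ := by positivity
            have h5 : |w| ^ q ≤ (C₂ * |v| * (|v| / t) ^ ρ) ^ q :=
              Real.rpow_le_rpow (abs_nonneg w) h2 hq0.le
            have h6a : ((|v| / t) ^ ρ) ^ q = |v| / t := by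
              rw [← Real.rpow_mul (by positivity : (0:ℝ) ≤ |v| / t) ρ q, hρq,
                Real.rpow_one]
            have h6 : (C₂ * |v| * (|v| / t) ^ ρ) ^ q
                = C₂ ^ q * |v| ^ q * (|v| / t) := by
              rw [Real.mul_rpow (by positivity) (by positivity),
                Real.mul_rpow hC₂.le (abs_nonneg v), h6a]
            have e1 : a * (|v| ^ q * (|v| / t)) = v ^ 2 := by
              have : a * (|v| ^ q * (|v| / t)) = (a * |v| ^ q) * |v| / t := by ring
              rw [this, ← hvt]
              field_simp
              nlinarith [sq_abs v]
            have h7 : a * |w| ^ q ≤ C₂ ^ q * v ^ 2 := by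
              calc a * |w| ^ q ≤ a * (C₂ ^ q * |v| ^ q * (|v| / t)) := by
                    rw [← h6]; exact mul_le_mul_of_nonneg_left h5 ha
                _ = C₂ ^ q * (a * (|v| ^ q * (|v| / t))) := by ring
                _ = C₂ ^ q * v ^ 2 := by rw [e1]
            rw [hm]
            have h10 : 0 ≤ (1 + C₁) ^ q * (1 + 1 / D) * v ^ 2 := by positivity
            nlinarith
          · -- D t < |v| : then a |v|^q < v^2 / D
            have h5 : a * |v| ^ q < v ^ 2 / D := by
              rw [← hvt, lt_div_iff₀ hD]
              have hstep : (D * t) * |v| < |v| * |v| :=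
                mul_lt_mul_of_pos_right hDt hv0
              nlinarith [sq_abs v]
            have h6 : a * |w| ^ q ≤ (1 + C₁) ^ q * (v ^ 2 / D) := by
              calc a * |w| ^ q ≤ (1 + C₁) ^ q * (a * |v| ^ q) := bound_gen
                _ ≤ (1 + C₁) ^ q * (v ^ 2 / D) :=
                    mul_le_mul_of_nonneg_left h5.le h8.le
            have h7 : (1 + C₁) ^ q * (v ^ 2 / D) ≤ (1 + C₁) ^ q * (1 + 1 / D) * v ^ 2 := by
              have he : v ^ 2 / D ≤ (1 + 1 / D) * v ^ 2 := by
                rw [div_eq_mul_inv, ← one_div]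
                nlinarith [sq_nonneg v, (by positivity : (0:ℝ) < 1 / D)]
              calc (1 + C₁) ^ q * (v ^ 2 / D)
                  ≤ (1 + C₁) ^ q * ((1 + 1 / D) * v ^ 2) :=
                    mul_le_mul_of_nonneg_left he h8.le
                _ = (1 + C₁) ^ q * (1 + 1 / D) * v ^ 2 := by ring
            rw [hm]
            have h11 : 0 ≤ C₂ ^ q * v ^ 2 := mul_nonneg h9 (sq_nonneg v)
            nlinarith
      -- now m ≤ 4 * G(x)
      have claim2 : m ≤ 4 * ((v - x) ^ 2 + a * |x| ^ q) := by
        rcases le_or_gt |x| (|v| / 2) with hx | hx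
        · have h5 : |v| / 2 ≤ |v - x| := by
            have := abs_sub_abs_le_abs_sub v x
            linarith
          have h6 : v ^ 2 ≤ 4 * (v - x) ^ 2 := by
            nlinarith [sq_abs v, sq_abs (v - x), abs_nonneg (v - x), abs_nonneg v]
          calc m ≤ v ^ 2 := min_le_left _ _
            _ ≤ 4 * (v - x) ^ 2 := h6
            _ ≤ 4 * ((v - x) ^ 2 + a * |x| ^ q) := by
                have : 0 ≤ a * |x| ^ q := by positivity
                linarith
        · have h5 : (|v| / 2) ^ q ≤ |x| ^ q :=
            Real.rpow_le_rpow (by positivity) hx.le hq0.le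
          have h6 : |v| ^ q = 2 ^ q * (|v| / 2) ^ q := by
            rw [← Real.mul_rpow (by norm_num) (by positivity),
              show (2:ℝ) * (|v| / 2) = |v| by ring]
          have h7 : (2:ℝ) ^ q ≤ 4 := by
            calc (2:ℝ) ^ q ≤ 2 ^ (2:ℝ) :=
                  Real.rpow_le_rpow_of_exponent_le (by norm_num) hq2
              _ = 4 := by
                  rw [show (2:ℝ) = ((2:ℕ):ℝ) by norm_num, Real.rpow_natCast]
                  norm_num
          have h8 : a * |v| ^ q ≤ 4 * (a * |x| ^ q) := by
            have h9 : 0 ≤ (|v| / 2) ^ q := by positivity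
            have h10 : (2:ℝ) ^ q * (|v| / 2) ^ q ≤ 4 * (|v| / 2) ^ q :=
              mul_le_mul_of_nonneg_right h7 h9
            have h11 : 4 * (|v| / 2) ^ q ≤ 4 * |x| ^ q := by linarith
            calc a * |v| ^ q = a * (2 ^ q * (|v| / 2) ^ q) := by rw [← h6]
              _ ≤ a * (4 * |x| ^ q) := mul_le_mul_of_nonneg_left (by linarith) ha
              _ = 4 * (a * |x| ^ q) := by ring
          calc m ≤ a * |v| ^ q := min_le_right _ _
            _ ≤ 4 * (a * |x| ^ q) := h8
            _ ≤ 4 * ((v - x) ^ 2 + a * |x| ^ q) := by nlinarith [sq_nonneg (v - x)]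
      calc (v - w) ^ 2 + a * |w| ^ q
          ≤ (C₁ ^ 2 + C₂ ^ q + (1 + C₁) ^ q * (1 + 1 / D)) * m := by nlinarith
        _ ≤ (C₁ ^ 2 + C₂ ^ q + (1 + C₁) ^ q * (1 + 1 / D)) *
            (4 * ((v - x) ^ 2 + a * |x| ^ q)) := by nlinarith
        _ = (4 * (C₁ ^ 2 + C₂ ^ q + (1 + C₁) ^ q * (1 + 1 / D))) *
            ((v - x) ^ 2 + a * |x| ^ q) := by ring

set_option maxHeartbeats 2000000 in
theorem shrinkage_minimizes_up_to_constant_factor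
    {H H' : Type*}
    [NormedAddCommGroup H] [InnerProductSpace ℝ H] [CompleteSpace H]
    [TopologicalSpace.SeparableSpace H]
    [NormedAddCommGroup H'] [InnerProductSpace ℝ H'] [CompleteSpace H']
    -- a shrinkage rule ϱ with exponent ρ ∈ [1/2, ∞)
    (ϱ : ℝ → ℝ → ℝ) (ρ : ℝ) (hρ : 1 / 2 ≤ ρ)
    (C₁ C₂ D : ℝ) (hC₁ : 0 < C₁) (hC₂ : 0 < C₂) (hD : 0 < D)
    (hrule₁ : ∀ (x a : ℝ), 0 ≤ a → |x - ϱ x a| ≤ C₁ * min |x| a)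
    (hrule₂ : ∀ (x a : ℝ), 0 < a → |x| ≤ D * a → |ϱ x a| ≤ C₂ * |x| * (|x| / a) ^ ρ)
    (q : ℝ) (hq : q = 1 / ρ)
    -- a bi-frame {f n}, {ftil n} for H
    (f ftil : ℕ → H) (A B A' B' : ℝ) (hA : 0 < A) (hAB : A ≤ B) (hA' : 0 < A') (hAB' : A' ≤ B')
    (hframe : ∀ g : H,
      A * ‖g‖ ^ 2 ≤ ∑' n, ⟪g, f n⟫ ^ 2 ∧ ∑' n, ⟪g, f n⟫ ^ 2 ≤ B * ‖g‖ ^ 2)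
    (hframe' : ∀ g : H,
      A' * ‖g‖ ^ 2 ≤ ∑' n, ⟪g, ftil n⟫ ^ 2 ∧ ∑' n, ⟪g, ftil n⟫ ^ 2 ≤ B' * ‖g‖ ^ 2)
    -- synthesis operator F of {f n} and analysis operator F̃* of the dual frame {ftil n}
    (F : lp (fun _ : ℕ => ℝ) 2 →L[ℝ] H)
    (hF : ∀ c : lp (fun _ : ℕ => ℝ) 2, HasSum (fun n => (c : ∀ _ : ℕ, ℝ) n • f n) (F c))
    (Fta : H →L[ℝ] lp (fun _ : ℕ => ℝ) 2)
    (hFta : ∀ (g : H) (n : ℕ), (Fta g : ∀ _ : ℕ, ℝ) n = ⟪g, ftil n⟫)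
    (hbi : ∀ g : H, F (Fta g) = g)
    -- a bounded operator L with bounded pseudo-inverse L^#
    (L : H →L[ℝ] H') (Lsharp : H' →L[ℝ] H)
    (hpinv : ∀ g : H, L (Lsharp (L g)) = L g)
    -- nonnegative weights, and boundedness of F̃* L^# L F on ℓ_q^{(α_n)}
    (α : ℕ → ℝ) (hα : ∀ n, 0 ≤ α n)
    (M : ℝ)
    (hM : ∀ ω : lp (fun _ : ℕ => ℝ) 2,
      wpen α q (fun n => (Fta (Lsharp (L (F ω))) : ∀ _ : ℕ, ℝ) n)
        ≤ ENNReal.ofReal M * wpen α q (fun n => (ω : ∀ _ : ℕ, ℝ) n)) :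
    ∃ C > (0 : ℝ), ∀ h : H', (∃ g₀ : H, L g₀ = h) →
      ∃ what : lp (fun _ : ℕ => ℝ) 2,
        -- `what` is the coordinatewise shrinkage of v = F̃* L^# h with thresholds α_n |v_n|^(q-1)
        (∀ n : ℕ, (what : ∀ _ : ℕ, ℝ) n =
          if (Fta (Lsharp h) : ∀ _ : ℕ, ℝ) n = 0 then 0
          else ϱ ((Fta (Lsharp h) : ∀ _ : ℕ, ℝ) n)
                 (α n * |(Fta (Lsharp h) : ∀ _ : ℕ, ℝ) n| ^ (q - 1))) ∧
        -- ĝ = L^# L F what minimizes J_q(h, ·) up to the constant factor C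
        ∀ g : H,
          ENNReal.ofReal (‖h - L (Lsharp (L (F what)))‖ ^ 2)
              + wpen α q (fun n => ⟪Lsharp (L (F what)), ftil n⟫)
            ≤ ENNReal.ofReal C *
              (ENNReal.ofReal (‖h - L g‖ ^ 2) + wpen α q (fun n => ⟪g, ftil n⟫)) := by
  have hρ0 : 0 < ρ := lt_of_lt_of_le (by norm_num) hρ
  have hq0 : 0 < q := by rw [hq]; positivity
  set C₀ : ℝ := 4 * (C₁ ^ 2 + C₂ ^ q + (1 + C₁) ^ q * (1 + 1 / D)) with hC₀def
  have hC₀ : 0 < C₀ := by rw [hC₀def]; positivity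
  set T : lp (fun _ : ℕ => ℝ) 2 →L[ℝ] H' := L.comp F with hTdef
  set S : H' →L[ℝ] lp (fun _ : ℕ => ℝ) 2 := Fta.comp Lsharp with hSdef
  set KT : ℝ := max 1 (max (‖T‖ ^ 2) M) with hKTdef
  set KS : ℝ := max 1 (max (‖S‖ ^ 2) M) with hKSdef
  have hKT1 : (1:ℝ) ≤ KT := le_max_left _ _
  have hKS1 : (1:ℝ) ≤ KS := le_max_left _ _
  have hKT0 : (0:ℝ) ≤ KT := by linarith
  have hKS0 : (0:ℝ) ≤ KS := by linarith
  have hTKT : ‖T‖ ^ 2 ≤ KT := le_trans (le_max_left _ _) (le_max_right _ _)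
  have hMKT : M ≤ KT := le_trans (le_max_right _ _) (le_max_right _ _)
  have hSKS : ‖S‖ ^ 2 ≤ KS := le_trans (le_max_left _ _) (le_max_right _ _)
  have hMKS : M ≤ KS := le_trans (le_max_right _ _) (le_max_right _ _)
  refine ⟨KT * C₀ * KS, by positivity, ?_⟩
  rintro h ⟨g₀, rfl⟩
  set v : lp (fun _ : ℕ => ℝ) 2 := Fta (Lsharp (L g₀)) with hvdef
  set wseq : ℕ → ℝ := fun n =>
    if (v : ∀ _ : ℕ, ℝ) n = 0 then 0
    else ϱ ((v : ∀ _ : ℕ, ℝ) n) (α n * |(v : ∀ _ : ℕ, ℝ) n| ^ (q - 1)) with hwseqdef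
  have habs : ∀ n, |wseq n| ≤ (1 + C₁) * |(v : ∀ _ : ℕ, ℝ) n| := by
    intro n
    by_cases hn : (v : ∀ _ : ℕ, ℝ) n = 0
    · simp only [hwseqdef, if_pos hn, abs_zero]
      positivity
    · simp only [hwseqdef, if_neg hn]
      set x := (v : ∀ _ : ℕ, ℝ) n with hx
      set t := α n * |x| ^ (q - 1) with ht
      have ht0 : 0 ≤ t := mul_nonneg (hα n) (Real.rpow_nonneg (abs_nonneg _) _)
      have h1 := hrule₁ x t ht0
      have h2 := abs_sub_abs_le_abs_sub (ϱ x t) x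
      have h3 := abs_sub_comm (ϱ x t) x
      have h4 : C₁ * min |x| t ≤ C₁ * |x| :=
        mul_le_mul_of_nonneg_left (min_le_left _ _) hC₁.le
      linarith
  have hmem : Memℓp wseq 2 := by
    apply memℓp_gen
    have hp : 0 < (2 : ℝ≥0∞).toReal := by norm_num
    have hs : Summable (fun n => (1 + C₁) ^ 2 * ‖(v : ∀ _ : ℕ, ℝ) n‖ ^ (2 : ℝ≥0∞).toReal) :=
      ((lp.memℓp v).summable hp).mul_left _
    refine hs.of_nonneg_of_le (fun n => ?_) (fun n => ?_)
    · positivity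
    · have h2 : ((2 : ℝ≥0∞)).toReal = ((2:ℕ) : ℝ) := by norm_num
      rw [h2, Real.rpow_natCast, Real.rpow_natCast]
      have h5 := habs n
      calc ‖wseq n‖ ^ 2 = |wseq n| ^ 2 := by rw [Real.norm_eq_abs]
        _ ≤ ((1 + C₁) * |(v : ∀ _ : ℕ, ℝ) n|) ^ 2 :=
            pow_le_pow_left₀ (abs_nonneg _) h5 2
        _ = (1 + C₁) ^ 2 * ‖(v : ∀ _ : ℕ, ℝ) n‖ ^ 2 := by
            rw [Real.norm_eq_abs]; ring
  refine ⟨⟨wseq, hmem⟩, fun n => rfl, ?_⟩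
  intro g
  set what : lp (fun _ : ℕ => ℝ) 2 := ⟨wseq, hmem⟩ with hwhatdef
  set ω' : lp (fun _ : ℕ => ℝ) 2 := Fta (Lsharp (L g)) with hω'def
  have e2 : F v = Lsharp (L g₀) := hbi _
  have e3 : L (F v) = L g₀ := by rw [e2, hpinv]
  have e1 : L (Lsharp (L (F what))) = L (F what) := hpinv _
  rw [e1]
  -- ENNReal sums
  set Sd : ℝ≥0∞ := ∑' n, ENNReal.ofReal (((v : ∀ _ : ℕ, ℝ) n - wseq n) ^ 2) with hSd
  set Sp : ℝ≥0∞ := ∑' n, ENNReal.ofReal (α n * |wseq n| ^ q) with hSp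
  set Sd' : ℝ≥0∞ := ∑' n, ENNReal.ofReal (((v : ∀ _ : ℕ, ℝ) n - (ω' : ∀ _ : ℕ, ℝ) n) ^ 2) with hSd'
  set Sp' : ℝ≥0∞ := ∑' n, ENNReal.ofReal (α n * |(ω' : ∀ _ : ℕ, ℝ) n| ^ q) with hSp'
  -- Step A
  have hTv : T (v - what) = L g₀ - L (F what) := by
    rw [hTdef]
    simp only [ContinuousLinearMap.comp_apply, map_sub]
    rw [e3]
  have hAnorm : ‖L g₀ - L (F what)‖ ^ 2 ≤ ‖T‖ ^ 2 * ‖v - what‖ ^ 2 := by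
    rw [← hTv]
    have h5 := T.le_opNorm (v - what)
    nlinarith [norm_nonneg (T (v - what)), norm_nonneg (v - what), norm_nonneg T]
  have hvw : ENNReal.ofReal (‖v - what‖ ^ 2) = Sd := by
    rw [lp2_ofReal_sq, hSd]
    congr 1
  have hstepA : ENNReal.ofReal (‖L g₀ - L (F what)‖ ^ 2)
      ≤ ENNReal.ofReal (‖T‖ ^ 2) * Sd := by
    calc ENNReal.ofReal (‖L g₀ - L (F what)‖ ^ 2)
        ≤ ENNReal.ofReal (‖T‖ ^ 2 * ‖v - what‖ ^ 2) := ENNReal.ofReal_le_ofReal hAnorm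
      _ = ENNReal.ofReal (‖T‖ ^ 2) * ENNReal.ofReal (‖v - what‖ ^ 2) :=
          ENNReal.ofReal_mul (sq_nonneg _)
      _ = ENNReal.ofReal (‖T‖ ^ 2) * Sd := by rw [hvw]
  -- Step B
  have hwhatpen : wpen α q (fun n => (what : ∀ _ : ℕ, ℝ) n) = Sp := by
    rw [show (fun n => (what : ∀ _ : ℕ, ℝ) n) = wseq from rfl]
    rw [wpen, wpen_eq' α q hq0.ne' wseq, hSp]
  have hstepB : wpen α q (fun n => ⟪Lsharp (L (F what)), ftil n⟫)
      ≤ ENNReal.ofReal M * Sp := by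
    have hcoord : (fun n => (⟪Lsharp (L (F what)), ftil n⟫ : ℝ))
        = fun n => (Fta (Lsharp (L (F what))) : ∀ _ : ℕ, ℝ) n := by
      funext n; rw [hFta]
    rw [hcoord]
    calc wpen α q (fun n => (Fta (Lsharp (L (F what))) : ∀ _ : ℕ, ℝ) n)
        ≤ ENNReal.ofReal M * wpen α q (fun n => (what : ∀ _ : ℕ, ℝ) n) := hM what
      _ = ENNReal.ofReal M * Sp := by rw [hwhatpen]
  -- Step C : pointwise comparison
  have hkey : ∀ n : ℕ,
      ENNReal.ofReal (((v : ∀ _ : ℕ, ℝ) n - wseq n) ^ 2)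
          + ENNReal.ofReal (α n * |wseq n| ^ q)
        ≤ ENNReal.ofReal C₀ *
            (ENNReal.ofReal (((v : ∀ _ : ℕ, ℝ) n - (ω' : ∀ _ : ℕ, ℝ) n) ^ 2)
              + ENNReal.ofReal (α n * |(ω' : ∀ _ : ℕ, ℝ) n| ^ q)) := by
    intro n
    have hreal := shrink_pointwise ϱ ρ hρ C₁ C₂ D hC₁ hC₂ hD hrule₁ hrule₂ q hq
      ((v : ∀ _ : ℕ, ℝ) n) ((ω' : ∀ _ : ℕ, ℝ) n) (α n) (hα n)
    have hwn : wseq n = (if (v : ∀ _ : ℕ, ℝ) n = 0 then 0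
        else ϱ ((v : ∀ _ : ℕ, ℝ) n) (α n * |(v : ∀ _ : ℕ, ℝ) n| ^ (q - 1))) := rfl
    rw [← hwn] at hreal
    have hnn1 : 0 ≤ α n * |wseq n| ^ q :=
      mul_nonneg (hα n) (Real.rpow_nonneg (abs_nonneg _) _)
    have hnn2 : 0 ≤ α n * |(ω' : ∀ _ : ℕ, ℝ) n| ^ q :=
      mul_nonneg (hα n) (Real.rpow_nonneg (abs_nonneg _) _)
    calc ENNReal.ofReal (((v : ∀ _ : ℕ, ℝ) n - wseq n) ^ 2)
          + ENNReal.ofReal (α n * |wseq n| ^ q)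
        = ENNReal.ofReal (((v : ∀ _ : ℕ, ℝ) n - wseq n) ^ 2 + α n * |wseq n| ^ q) :=
          (ENNReal.ofReal_add (sq_nonneg _) hnn1).symm
      _ ≤ ENNReal.ofReal (C₀ * (((v : ∀ _ : ℕ, ℝ) n - (ω' : ∀ _ : ℕ, ℝ) n) ^ 2
            + α n * |(ω' : ∀ _ : ℕ, ℝ) n| ^ q)) := ENNReal.ofReal_le_ofReal hreal
      _ = ENNReal.ofReal C₀ *
            (ENNReal.ofReal (((v : ∀ _ : ℕ, ℝ) n - (ω' : ∀ _ : ℕ, ℝ) n) ^ 2)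
              + ENNReal.ofReal (α n * |(ω' : ∀ _ : ℕ, ℝ) n| ^ q)) := by
          rw [ENNReal.ofReal_mul hC₀.le, ENNReal.ofReal_add (sq_nonneg _) hnn2]
  have hsum : Sd + Sp ≤ ENNReal.ofReal C₀ * (Sd' + Sp') := by
    rw [hSd, hSp, hSd', hSp', ← ENNReal.tsum_add, ← ENNReal.tsum_add,
      ← ENNReal.tsum_mul_left]
    exact ENNReal.tsum_le_tsum hkey
  -- Step D
  have hSv : S (L g₀ - L g) = v - ω' := by
    rw [hSdef]
    simp only [ContinuousLinearMap.comp_apply, map_sub]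
    rfl
  have hDnorm : ‖v - ω'‖ ^ 2 ≤ ‖S‖ ^ 2 * ‖L g₀ - L g‖ ^ 2 := by
    rw [← hSv]
    have h5 := S.le_opNorm (L g₀ - L g)
    nlinarith [norm_nonneg (S (L g₀ - L g)), norm_nonneg (L g₀ - L g), norm_nonneg S]
  have hvω : ENNReal.ofReal (‖v - ω'‖ ^ 2) = Sd' := by
    rw [lp2_ofReal_sq, hSd']
    congr 1
  have hstepD : Sd' ≤ ENNReal.ofReal (‖S‖ ^ 2) * ENNReal.ofReal (‖L g₀ - L g‖ ^ 2) := by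
    rw [← hvω, ← ENNReal.ofReal_mul (sq_nonneg _)]
    exact ENNReal.ofReal_le_ofReal hDnorm
  -- Step E
  have hstepE : Sp' ≤ ENNReal.ofReal M * wpen α q (fun n => ⟪g, ftil n⟫) := by
    have hg : F (Fta g) = g := hbi g
    have h6 := hM (Fta g)
    rw [hg] at h6
    have h7 : wpen α q (fun n => (Fta (Lsharp (L g)) : ∀ _ : ℕ, ℝ) n) = Sp' := by
      rw [wpen, wpen_eq' α q hq0.ne']
    have h8 : wpen α q (fun n => (Fta g : ∀ _ : ℕ, ℝ) n)
        = wpen α q (fun n => ⟪g, ftil n⟫) := by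
      congr 1
      funext n
      rw [hFta]
    rw [h7, h8] at h6
    exact h6
  -- assemble
  set peng : ℝ≥0∞ := wpen α q (fun n => ⟪g, ftil n⟫) with hpeng
  calc ENNReal.ofReal (‖L g₀ - L (F what)‖ ^ 2)
        + wpen α q (fun n => ⟪Lsharp (L (F what)), ftil n⟫)
      ≤ ENNReal.ofReal (‖T‖ ^ 2) * Sd + ENNReal.ofReal M * Sp :=
        add_le_add hstepA hstepB
    _ ≤ ENNReal.ofReal KT * Sd + ENNReal.ofReal KT * Sp :=
        add_le_add (mul_le_mul_left (ENNReal.ofReal_le_ofReal hTKT) _)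
          (mul_le_mul_left (ENNReal.ofReal_le_ofReal hMKT) _)
    _ = ENNReal.ofReal KT * (Sd + Sp) := by rw [mul_add]
    _ ≤ ENNReal.ofReal KT * (ENNReal.ofReal C₀ * (Sd' + Sp')) :=
        mul_le_mul_right hsum _
    _ ≤ ENNReal.ofReal KT * (ENNReal.ofReal C₀ *
          (ENNReal.ofReal KS * (ENNReal.ofReal (‖L g₀ - L g‖ ^ 2) + peng))) := by
        refine mul_le_mul_right (mul_le_mul_right ?_ _) _
        rw [mul_add]
        refine add_le_add ?_ ?_
        · exact le_trans hstepD
            (mul_le_mul_left (ENNReal.ofReal_le_ofReal hSKS) _)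
        · exact le_trans hstepE
            (mul_le_mul_left (ENNReal.ofReal_le_ofReal hMKS) _)
    _ = ENNReal.ofReal (KT * C₀ * KS) *
          (ENNReal.ofReal (‖L g₀ - L g‖ ^ 2) + peng) := by
        rw [ENNReal.ofReal_mul (by positivity : (0:ℝ) ≤ KT * C₀),
          ENNReal.ofReal_mul hKT0]
        ring
end
end

section
/- Let q ∈ [0,2] (with the convention 0⁰ = 0 when q = 0), let {f_n}, {f̃_n} be a bi-frame for a separable Hilbert space H with synthesis operator F and dual analysis operator F̃*, let L : H → H′ be a bounded operator with bounded pseudo-inverse L^#, let (α_n) be nonnegative weights, and suppose F̃* L^# L F is bounded on ℓ_q^{(α_n)}, i.e., there is M with ∑_n α_n |(F̃* L^# L F ω)_n|^q ≤ M ∑_n α_n |ω_n|^q for all ω. Fix h in the range of L and set v = F̃* L^# h. If ω̂ ∈ ℓ²(ℕ) minimizes the decoupled functional I_q(v, ω) = ‖v − ω‖²_{ℓ²} + ∑_n α_n |ω_n|^q up to a constant factor (i.e., there is C′ with I_q(v, ω̂) ≤ C′ I_q(v, ω) for all ω ∈ ℓ²), then ĝ = L^# L F ω̂ minimizes J_q(h,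 g) = ‖h − Lg‖²_{H′} + ∑_n α_n |⟨g, f̃_n⟩|^q up to a constant factor: there is C (depending only on C′, the bi-frame, L, L^#, and M) with J_q(h, ĝ) ≤ C J_q(h, g) for all g ∈ H. -/
open scoped RealInnerProductSpace ENNReal

noncomputable section

theorem decoupled_minimizer_gives_minimizer
    {H H' : Type*}
    [NormedAddCommGroup H] [InnerProductSpace ℝ H] [CompleteSpace H]
    [TopologicalSpace.SeparableSpace H]
    [NormedAddCommGroup H'] [InnerProductSpace ℝ H'] [CompleteSpace H']
    (q : ℝ) (hq : q ∈ Set.Icc (0 : ℝ) 2)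
    -- a bi-frame {f n}, {ftil n} for H
    (f ftil : ℕ → H) (A B A' B' : ℝ) (hA : 0 < A) (hAB : A ≤ B) (hA' : 0 < A') (hAB' : A' ≤ B')
    (hframe : ∀ g : H,
      A * ‖g‖ ^ 2 ≤ ∑' n, ⟪g, f n⟫ ^ 2 ∧ ∑' n, ⟪g, f n⟫ ^ 2 ≤ B * ‖g‖ ^ 2)
    (hframe' : ∀ g : H,
      A' * ‖g‖ ^ 2 ≤ ∑' n, ⟪g, ftil n⟫ ^ 2 ∧ ∑' n, ⟪g, ftil n⟫ ^ 2 ≤ B' * ‖g‖ ^ 2)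
    -- synthesis operator F of {f n} and analysis operator F̃* of the dual frame {ftil n}
    (F : lp (fun _ : ℕ => ℝ) 2 →L[ℝ] H)
    (hF : ∀ c : lp (fun _ : ℕ => ℝ) 2, HasSum (fun n => (c : ∀ _ : ℕ, ℝ) n • f n) (F c))
    (Fta : H →L[ℝ] lp (fun _ : ℕ => ℝ) 2)
    (hFta : ∀ (g : H) (n : ℕ), (Fta g : ∀ _ : ℕ, ℝ) n = ⟪g, ftil n⟫)
    (hbi : ∀ g : H, F (Fta g) = g)
    -- a bounded operator L with bounded pseudo-inverse L^#
    (L : H →L[ℝ] H') (Lsharp : H' →L[ℝ] H)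
    (hpinv : ∀ g : H, L (Lsharp (L g)) = L g)
    -- nonnegative weights, and boundedness of F̃* L^# L F on ℓ_q^{(α_n)}
    (α : ℕ → ℝ) (hα : ∀ n, 0 ≤ α n)
    (M : ℝ)
    (hM : ∀ ω : lp (fun _ : ℕ => ℝ) 2,
      wpen α q (fun n => (Fta (Lsharp (L (F ω))) : ∀ _ : ℕ, ℝ) n)
        ≤ ENNReal.ofReal M * wpen α q (fun n => (ω : ∀ _ : ℕ, ℝ) n))
    (C' : ℝ) (hC' : 0 < C') :
    ∃ C > (0 : ℝ), ∀ h : H', (∃ g₀ : H, L g₀ = h) →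
      ∀ what : lp (fun _ : ℕ => ℝ) 2,
        -- if ω̂ minimizes the decoupled functional I_q(v, ·), v = F̃* L^# h, up to the factor C'
        (∀ ω : lp (fun _ : ℕ => ℝ) 2,
          ENNReal.ofReal (‖Fta (Lsharp h) - what‖ ^ 2) + wpen α q (fun n => (what : ∀ _ : ℕ, ℝ) n)
            ≤ ENNReal.ofReal C' *
              (ENNReal.ofReal (‖Fta (Lsharp h) - ω‖ ^ 2)
                + wpen α q (fun n => (ω : ∀ _ : ℕ, ℝ) n))) →
        -- then ĝ = L^# L F ω̂ minimizes J_q(h, ·) up to the factor C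
        ∀ g : H,
          ENNReal.ofReal (‖h - L (Lsharp (L (F what)))‖ ^ 2)
              + wpen α q (fun n => ⟪Lsharp (L (F what)), ftil n⟫)
            ≤ ENNReal.ofReal C *
              (ENNReal.ofReal (‖h - L g‖ ^ 2) + wpen α q (fun n => ⟪g, ftil n⟫)) := by
  classical
  set a : ℝ := (‖L‖ * ‖F‖) ^ 2 with ha
  set b : ℝ := (‖Fta‖ * ‖Lsharp‖) ^ 2 with hb
  set m : ℝ := max M 0 with hm
  have hm0 : 0 ≤ m := le_max_right _ _
  have ha0 : 0 ≤ a := sq_nonneg _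
  have hb0 : 0 ≤ b := sq_nonneg _
  set K₁ : ℝ := max a m + 1 with hK₁
  set K₂ : ℝ := max b m + 1 with hK₂
  have hK₁0 : 0 < K₁ := by positivity
  have hK₂0 : 0 < K₂ := by positivity
  have haK₁ : a ≤ K₁ := by have := le_max_left a m; simp only [hK₁]; linarith
  have hmK₁ : m ≤ K₁ := by have := le_max_right a m; simp only [hK₁]; linarith
  have hbK₂ : b ≤ K₂ := by have := le_max_left b m; simp only [hK₂]; linarith
  have hmK₂ : m ≤ K₂ := by have := le_max_right b m; simp only [hK₂]; linarith
  have hMm : ENNReal.ofReal M ≤ ENNReal.ofReal m := ENNReal.ofReal_le_ofReal (le_max_left _ _)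
  refine ⟨K₁ * C' * K₂, by positivity, ?_⟩
  rintro h ⟨g₀, hg₀⟩ what hmin g
  set v : lp (fun _ : ℕ => ℝ) 2 := Fta (Lsharp h) with hv
  set ghat : H := Lsharp (L (F what)) with hghat
  have hLLh : L (Lsharp h) = h := by rw [← hg₀]; exact hpinv g₀
  -- norm bound for the first term of the LHS
  have hnorm1 : ‖h - L ghat‖ ^ 2 ≤ a * ‖v - what‖ ^ 2 := by
    have e1 : h - L ghat = L (F (v - what)) := by
      rw [hghat, hpinv, map_sub, hv, hbi, map_sub, hLLh]
    have e2 : ‖h - L ghat‖ ≤ ‖L‖ * ‖F‖ * ‖v - what‖ := by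
      rw [e1]
      calc ‖L (F (v - what))‖ ≤ ‖L‖ * ‖F (v - what)‖ := L.le_opNorm _
        _ ≤ ‖L‖ * (‖F‖ * ‖v - what‖) :=
            mul_le_mul_of_nonneg_left (F.le_opNorm _) (norm_nonneg _)
        _ = ‖L‖ * ‖F‖ * ‖v - what‖ := by ring
    calc ‖h - L ghat‖ ^ 2 ≤ (‖L‖ * ‖F‖ * ‖v - what‖) ^ 2 :=
          pow_le_pow_left₀ (norm_nonneg _) e2 2
      _ = a * ‖v - what‖ ^ 2 := by rw [ha]; ring
  -- penalty bound for the LHS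
  have hpen1 : wpen α q (fun n => ⟪ghat, ftil n⟫)
      ≤ ENNReal.ofReal M * wpen α q (fun n => (what : ∀ _ : ℕ, ℝ) n) := by
    have : (fun n => ⟪ghat, ftil n⟫)
        = fun n => (Fta (Lsharp (L (F what))) : ∀ _ : ℕ, ℝ) n := by
      funext n; rw [hghat, hFta]
    rw [this]; exact hM what
  -- the comparison element
  set ω : lp (fun _ : ℕ => ℝ) 2 := Fta (Lsharp (L g)) with hω
  have hpen2 : wpen α q (fun n => (ω : ∀ _ : ℕ, ℝ) n)
      ≤ ENNReal.ofReal M * wpen α q (fun n => ⟪g, ftil n⟫) := by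
    have e : (fun n => (ω : ∀ _ : ℕ, ℝ) n)
        = fun n => (Fta (Lsharp (L (F (Fta g)))) : ∀ _ : ℕ, ℝ) n := by
      funext n; rw [hω, hbi]
    have e2 : (fun n => (Fta g : ∀ _ : ℕ, ℝ) n) = fun n => ⟪g, ftil n⟫ := by
      funext n; rw [hFta]
    rw [e, ← e2]; exact hM (Fta g)
  have hnorm2 : ‖v - ω‖ ^ 2 ≤ b * ‖h - L g‖ ^ 2 := by
    have e1 : v - ω = Fta (Lsharp (h - L g)) := by
      rw [hv, hω, map_sub, map_sub]
    have e2 : ‖v - ω‖ ≤ ‖Fta‖ * ‖Lsharp‖ * ‖h - L g‖ := by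
      rw [e1]
      calc ‖Fta (Lsharp (h - L g))‖ ≤ ‖Fta‖ * ‖Lsharp (h - L g)‖ := Fta.le_opNorm _
        _ ≤ ‖Fta‖ * (‖Lsharp‖ * ‖h - L g‖) :=
            mul_le_mul_of_nonneg_left (Lsharp.le_opNorm _) (norm_nonneg _)
        _ = ‖Fta‖ * ‖Lsharp‖ * ‖h - L g‖ := by ring
    calc ‖v - ω‖ ^ 2 ≤ (‖Fta‖ * ‖Lsharp‖ * ‖h - L g‖) ^ 2 :=
          pow_le_pow_left₀ (norm_nonneg _) e2 2
      _ = b * ‖h - L g‖ ^ 2 := by rw [hb]; ring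
  -- chain of inequalities in ℝ≥0∞
  calc ENNReal.ofReal (‖h - L ghat‖ ^ 2) + wpen α q (fun n => ⟪ghat, ftil n⟫)
      ≤ ENNReal.ofReal K₁ * ENNReal.ofReal (‖v - what‖ ^ 2)
        + ENNReal.ofReal K₁ * wpen α q (fun n => (what : ∀ _ : ℕ, ℝ) n) := by
        refine add_le_add ?_ ?_
        · calc ENNReal.ofReal (‖h - L ghat‖ ^ 2) ≤ ENNReal.ofReal (a * ‖v - what‖ ^ 2) :=
              ENNReal.ofReal_le_ofReal hnorm1
            _ = ENNReal.ofReal a * ENNReal.ofReal (‖v - what‖ ^ 2) :=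
              ENNReal.ofReal_mul ha0
            _ ≤ ENNReal.ofReal K₁ * ENNReal.ofReal (‖v - what‖ ^ 2) := by
              gcongr
        · calc wpen α q (fun n => ⟪ghat, ftil n⟫)
              ≤ ENNReal.ofReal M * wpen α q (fun n => (what : ∀ _ : ℕ, ℝ) n) := hpen1
            _ ≤ ENNReal.ofReal K₁ * wpen α q (fun n => (what : ∀ _ : ℕ, ℝ) n) := by
              gcongr
              exact le_trans (le_max_left M 0) hmK₁
    _ = ENNReal.ofReal K₁ *
        (ENNReal.ofReal (‖v - what‖ ^ 2) + wpen α q (fun n => (what : ∀ _ : ℕ, ℝ) n)) := by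
        rw [mul_add]
    _ ≤ ENNReal.ofReal K₁ * (ENNReal.ofReal C' *
        (ENNReal.ofReal (‖v - ω‖ ^ 2) + wpen α q (fun n => (ω : ∀ _ : ℕ, ℝ) n))) := by
        gcongr
        exact hmin ω
    _ ≤ ENNReal.ofReal K₁ * (ENNReal.ofReal C' * (ENNReal.ofReal K₂ *
        (ENNReal.ofReal (‖h - L g‖ ^ 2) + wpen α q (fun n => ⟪g, ftil n⟫)))) := by
        gcongr ENNReal.ofReal K₁ * (ENNReal.ofReal C' * ?_)
        calc ENNReal.ofReal (‖v - ω‖ ^ 2) + wpen α q (fun n => (ω : ∀ _ : ℕ, ℝ) n)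
            ≤ ENNReal.ofReal K₂ * ENNReal.ofReal (‖h - L g‖ ^ 2)
              + ENNReal.ofReal K₂ * wpen α q (fun n => ⟪g, ftil n⟫) := by
              refine add_le_add ?_ ?_
              · calc ENNReal.ofReal (‖v - ω‖ ^ 2) ≤ ENNReal.ofReal (b * ‖h - L g‖ ^ 2) :=
                    ENNReal.ofReal_le_ofReal hnorm2
                  _ = ENNReal.ofReal b * ENNReal.ofReal (‖h - L g‖ ^ 2) :=
                    ENNReal.ofReal_mul hb0
                  _ ≤ ENNReal.ofReal K₂ * ENNReal.ofReal (‖h - L g‖ ^ 2) := by gcongr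
              · calc wpen α q (fun n => (ω : ∀ _ : ℕ, ℝ) n)
                    ≤ ENNReal.ofReal M * wpen α q (fun n => ⟪g, ftil n⟫) := hpen2
                  _ ≤ ENNReal.ofReal K₂ * wpen α q (fun n => ⟪g, ftil n⟫) := by
                    gcongr
                    exact le_trans (le_max_left M 0) hmK₂
          _ = ENNReal.ofReal K₂ *
              (ENNReal.ofReal (‖h - L g‖ ^ 2) + wpen α q (fun n => ⟪g, ftil n⟫)) := by
              rw [mul_add]
    _ = ENNReal.ofReal (K₁ * C' * K₂) *
        (ENNReal.ofReal (‖h - L g‖ ^ 2) + wpen α q (fun n => ⟪g, ftil n⟫)) := by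
        rw [ENNReal.ofReal_mul (by positivity : (0:ℝ) ≤ K₁ * C'),
          ENNReal.ofReal_mul hK₁0.le]
        ring
end
end

section
/- Let q ∈ [0,2] (with 0⁰ = 0 when q = 0), let {f_n}, {f̃_n} be a bi-frame for a separable Hilbert space H with synthesis operator F and dual analysis operator F̃*, let L : H → H′ be bounded with bounded pseudo-inverse L^#, let (α_n) be nonnegative weights, and suppose both F̃* L^# L F and F̃* F are bounded on ℓ_q^{(α_n)}. Fix h in the range of L and set v = F̃* L^# h. If ω̂ ∈ ℓ²(ℕ) satisfies I_q(v, ω̂) ≤ C′ I_q(v, ω) for all ω ∈ ℓ², where I_q(v, ω) = ‖v − ω‖²_{ℓ²} + ∑_n α_n |ω_n|^q, then ĝ = F ω̂ satisfies J_q(h, ĝ) ≤ C J_q(h, g) for all g ∈ H and some constant C not depending on h or g, where J_q(h, g) = ‖h − Lg‖²_{H′} + ∑_n α_n |⟨g, f̃_n⟩|^q. -/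
open scoped RealInnerProductSpace ENNReal

noncomputable section

theorem decoupled_minimizer_gives_minimizer_synthesis
    {H H' : Type*}
    [NormedAddCommGroup H] [InnerProductSpace ℝ H] [CompleteSpace H]
    [TopologicalSpace.SeparableSpace H]
    [NormedAddCommGroup H'] [InnerProductSpace ℝ H'] [CompleteSpace H']
    (q : ℝ) (hq : q ∈ Set.Icc (0 : ℝ) 2)
    -- a bi-frame {f n}, {ftil n} for H
    (f ftil : ℕ → H) (A B A' B' : ℝ) (hA : 0 < A) (hAB : A ≤ B) (hA' : 0 < A') (hAB' : A' ≤ B')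
    (hframe : ∀ g : H,
      A * ‖g‖ ^ 2 ≤ ∑' n, ⟪g, f n⟫ ^ 2 ∧ ∑' n, ⟪g, f n⟫ ^ 2 ≤ B * ‖g‖ ^ 2)
    (hframe' : ∀ g : H,
      A' * ‖g‖ ^ 2 ≤ ∑' n, ⟪g, ftil n⟫ ^ 2 ∧ ∑' n, ⟪g, ftil n⟫ ^ 2 ≤ B' * ‖g‖ ^ 2)
    -- synthesis operator F of {f n} and analysis operator F̃* of the dual frame {ftil n}
    (F : lp (fun _ : ℕ => ℝ) 2 →L[ℝ] H)
    (hF : ∀ c : lp (fun _ : ℕ => ℝ) 2, HasSum (fun n => (c : ∀ _ : ℕ, ℝ) n • f n) (F c))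
    (Fta : H →L[ℝ] lp (fun _ : ℕ => ℝ) 2)
    (hFta : ∀ (g : H) (n : ℕ), (Fta g : ∀ _ : ℕ, ℝ) n = ⟪g, ftil n⟫)
    (hbi : ∀ g : H, F (Fta g) = g)
    -- a bounded operator L with bounded pseudo-inverse L^#
    (L : H →L[ℝ] H') (Lsharp : H' →L[ℝ] H)
    (hpinv : ∀ g : H, L (Lsharp (L g)) = L g)
    -- nonnegative weights, and boundedness of F̃* L^# L F on ℓ_q^{(α_n)}
    (α : ℕ → ℝ) (hα : ∀ n, 0 ≤ α n)
    (M : ℝ)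
    (hM : ∀ ω : lp (fun _ : ℕ => ℝ) 2,
      wpen α q (fun n => (Fta (Lsharp (L (F ω))) : ∀ _ : ℕ, ℝ) n)
        ≤ ENNReal.ofReal M * wpen α q (fun n => (ω : ∀ _ : ℕ, ℝ) n))
    (M' : ℝ)
    (hM' : ∀ ω : lp (fun _ : ℕ => ℝ) 2,
      wpen α q (fun n => (Fta (F ω) : ∀ _ : ℕ, ℝ) n)
        ≤ ENNReal.ofReal M' * wpen α q (fun n => (ω : ∀ _ : ℕ, ℝ) n))
    (C' : ℝ) (hC' : 0 < C') :
    ∃ C > (0 : ℝ), ∀ h : H', (∃ g₀ : H, L g₀ = h) →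
      ∀ what : lp (fun _ : ℕ => ℝ) 2,
        -- if ω̂ minimizes the decoupled functional I_q(v, ·), v = F̃* L^# h, up to the factor C'
        (∀ ω : lp (fun _ : ℕ => ℝ) 2,
          ENNReal.ofReal (‖Fta (Lsharp h) - what‖ ^ 2) + wpen α q (fun n => (what : ∀ _ : ℕ, ℝ) n)
            ≤ ENNReal.ofReal C' *
              (ENNReal.ofReal (‖Fta (Lsharp h) - ω‖ ^ 2)
                + wpen α q (fun n => (ω : ∀ _ : ℕ, ℝ) n))) →
        -- then ĝ = L^# L F ω̂ minimizes J_q(h, ·) up to the factor C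
        ∀ g : H,
          ENNReal.ofReal (‖h - L (F what)‖ ^ 2)
              + wpen α q (fun n => ⟪F what, ftil n⟫)
            ≤ ENNReal.ofReal C *
              (ENNReal.ofReal (‖h - L g‖ ^ 2) + wpen α q (fun n => ⟪g, ftil n⟫)) := by
  classical
  set b : ℝ := max ((‖L‖ * ‖F‖) ^ 2) (max M' 1) with hbdef
  set c : ℝ := max ((‖Fta‖ * ‖Lsharp‖) ^ 2) (max M 1) with hcdef
  have hb1 : (1 : ℝ) ≤ b := le_trans (le_max_right _ _) (le_max_right _ _)
  have hc1 : (1 : ℝ) ≤ c := le_trans (le_max_right _ _) (le_max_right _ _)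
  have hb0 : (0 : ℝ) ≤ b := le_trans zero_le_one hb1
  have hc0 : (0 : ℝ) ≤ c := le_trans zero_le_one hc1
  refine ⟨C' * (b * c), mul_pos hC' (mul_pos (lt_of_lt_of_le zero_lt_one hb1) (lt_of_lt_of_le zero_lt_one hc1)), ?_⟩
  rintro h ⟨g₀, hg₀⟩ what hwhat g
  have hLLh : L (Lsharp h) = h := by rw [← hg₀]; exact hpinv g₀
  -- Step 1: bound the target functional by b * (decoupled functional at what)
  have e1 : h - L (F what) = L (F (Fta (Lsharp h) - what)) := by
    rw [map_sub, map_sub, hbi, hLLh]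
  have n1 : ‖h - L (F what)‖ ^ 2 ≤ b * ‖Fta (Lsharp h) - what‖ ^ 2 := by
    rw [e1]
    calc ‖L (F (Fta (Lsharp h) - what))‖ ^ 2
        ≤ (‖L‖ * ‖F‖ * ‖Fta (Lsharp h) - what‖) ^ 2 := by
          apply pow_le_pow_left₀ (norm_nonneg _)
          calc ‖L (F (Fta (Lsharp h) - what))‖ ≤ ‖L‖ * ‖F (Fta (Lsharp h) - what)‖ :=
                L.le_opNorm _
            _ ≤ ‖L‖ * (‖F‖ * ‖Fta (Lsharp h) - what‖) :=
                mul_le_mul_of_nonneg_left (F.le_opNorm _) (norm_nonneg _)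
            _ = ‖L‖ * ‖F‖ * ‖Fta (Lsharp h) - what‖ := (mul_assoc _ _ _).symm
      _ = (‖L‖ * ‖F‖) ^ 2 * ‖Fta (Lsharp h) - what‖ ^ 2 := mul_pow _ _ _
      _ ≤ b * ‖Fta (Lsharp h) - what‖ ^ 2 :=
          mul_le_mul_of_nonneg_right (le_max_left _ _) (sq_nonneg _)
  have ew : (fun n => ⟪F what, ftil n⟫) = (fun n => (Fta (F what) : ∀ _ : ℕ, ℝ) n) :=
    funext fun n => (hFta _ n).symm
  have w1 : wpen α q (fun n => ⟪F what, ftil n⟫)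
      ≤ ENNReal.ofReal b * wpen α q (fun n => (what : ∀ _ : ℕ, ℝ) n) := by
    rw [ew]
    refine le_trans (hM' what) ?_
    exact mul_le_mul_left (ENNReal.ofReal_le_ofReal
      (le_trans (le_max_left _ _) (le_max_right _ _))) _
  have step1 : ENNReal.ofReal (‖h - L (F what)‖ ^ 2) + wpen α q (fun n => ⟪F what, ftil n⟫)
      ≤ ENNReal.ofReal b *
        (ENNReal.ofReal (‖Fta (Lsharp h) - what‖ ^ 2)
          + wpen α q (fun n => (what : ∀ _ : ℕ, ℝ) n)) := by
    rw [mul_add]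
    refine add_le_add ?_ w1
    calc ENNReal.ofReal (‖h - L (F what)‖ ^ 2)
        ≤ ENNReal.ofReal (b * ‖Fta (Lsharp h) - what‖ ^ 2) := ENNReal.ofReal_le_ofReal n1
      _ = ENNReal.ofReal b * ENNReal.ofReal (‖Fta (Lsharp h) - what‖ ^ 2) :=
          ENNReal.ofReal_mul hb0
  -- Step 2: bound the decoupled functional at ω := Fta (Lsharp (L g)) by c * (target at g)
  set ω : lp (fun _ : ℕ => ℝ) 2 := Fta (Lsharp (L g)) with hωdef
  have e2 : Fta (Lsharp h) - ω = Fta (Lsharp (h - L g)) := by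
    rw [hωdef, map_sub, map_sub]
  have n2 : ‖Fta (Lsharp h) - ω‖ ^ 2 ≤ c * ‖h - L g‖ ^ 2 := by
    rw [e2]
    calc ‖Fta (Lsharp (h - L g))‖ ^ 2
        ≤ (‖Fta‖ * ‖Lsharp‖ * ‖h - L g‖) ^ 2 := by
          apply pow_le_pow_left₀ (norm_nonneg _)
          calc ‖Fta (Lsharp (h - L g))‖ ≤ ‖Fta‖ * ‖Lsharp (h - L g)‖ := Fta.le_opNorm _
            _ ≤ ‖Fta‖ * (‖Lsharp‖ * ‖h - L g‖) :=
                mul_le_mul_of_nonneg_left (Lsharp.le_opNorm _) (norm_nonneg _)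
            _ = ‖Fta‖ * ‖Lsharp‖ * ‖h - L g‖ := (mul_assoc _ _ _).symm
      _ = (‖Fta‖ * ‖Lsharp‖) ^ 2 * ‖h - L g‖ ^ 2 := mul_pow _ _ _
      _ ≤ c * ‖h - L g‖ ^ 2 :=
          mul_le_mul_of_nonneg_right (le_max_left _ _) (sq_nonneg _)
  have w2 : wpen α q (fun n => (ω : ∀ _ : ℕ, ℝ) n)
      ≤ ENNReal.ofReal c * wpen α q (fun n => ⟪g, ftil n⟫) := by
    have h1 := hM (Fta g)
    rw [hbi g] at h1
    have h2 : wpen α q (fun n => ((Fta g : lp (fun _ : ℕ => ℝ) 2) : ∀ _ : ℕ, ℝ) n)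
        = wpen α q (fun n => ⟪g, ftil n⟫) := by
      congr 1
      exact funext fun n => hFta g n
    rw [h2] at h1
    refine le_trans h1 ?_
    exact mul_le_mul_left (ENNReal.ofReal_le_ofReal
      (le_trans (le_max_left _ _) (le_max_right _ _))) _
  have step2 : ENNReal.ofReal (‖Fta (Lsharp h) - ω‖ ^ 2)
        + wpen α q (fun n => (ω : ∀ _ : ℕ, ℝ) n)
      ≤ ENNReal.ofReal c *
        (ENNReal.ofReal (‖h - L g‖ ^ 2) + wpen α q (fun n => ⟪g, ftil n⟫)) := by
    rw [mul_add]
    refine add_le_add ?_ w2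
    calc ENNReal.ofReal (‖Fta (Lsharp h) - ω‖ ^ 2)
        ≤ ENNReal.ofReal (c * ‖h - L g‖ ^ 2) := ENNReal.ofReal_le_ofReal n2
      _ = ENNReal.ofReal c * ENNReal.ofReal (‖h - L g‖ ^ 2) := ENNReal.ofReal_mul hc0
  -- Combine
  calc ENNReal.ofReal (‖h - L (F what)‖ ^ 2) + wpen α q (fun n => ⟪F what, ftil n⟫)
      ≤ ENNReal.ofReal b *
        (ENNReal.ofReal (‖Fta (Lsharp h) - what‖ ^ 2)
          + wpen α q (fun n => (what : ∀ _ : ℕ, ℝ) n)) := step1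
    _ ≤ ENNReal.ofReal b * (ENNReal.ofReal C' *
        (ENNReal.ofReal (‖Fta (Lsharp h) - ω‖ ^ 2)
          + wpen α q (fun n => (ω : ∀ _ : ℕ, ℝ) n))) :=
        mul_le_mul_right (hwhat ω) _
    _ ≤ ENNReal.ofReal b * (ENNReal.ofReal C' * (ENNReal.ofReal c *
        (ENNReal.ofReal (‖h - L g‖ ^ 2) + wpen α q (fun n => ⟪g, ftil n⟫)))) := by
        exact mul_le_mul_right (mul_le_mul_right step2 _) _
    _ = ENNReal.ofReal (C' * (b * c)) *
        (ENNReal.ofReal (‖h - L g‖ ^ 2) + wpen α q (fun n => ⟪g, ftil n⟫)) := by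
        rw [ENNReal.ofReal_mul hC'.le, ENNReal.ofReal_mul hb0]
        ring
end
end

section
/- Let ϱ : ℝ × [0,∞) → ℝ be a shrinkage rule with exponent ρ ∈ [1/2, ∞): there are constants C₁, C₂, D > 0 with |x − ϱ(x,α)| ≤ C₁ min(|x|, α) for all α ≥ 0, x ∈ ℝ, and |ϱ(x,α)| ≤ C₂ |x| (|x|/α)^ρ whenever α > 0 and |x| ≤ Dα. Let (α_n)_{n∈ℕ} be nonnegative weights. Then there exists a constant C > 0 (depending only on C₁, C₂, D, ρ) such that for all q ∈ [1/ρ, 2], all v ∈ ℓ²(ℕ), and all ω ∈ ℓ²(ℕ), I_q(v, ω̂) ≤ C · I_q(v, ω), where I_q(v, ω) = ‖v − ω‖²_{ℓ²} + ∑_n α_n |ω_n|^q and ω̂ is the sequence with ω̂_n = ϱ(v_n, α_n |v_n|^{q−1}) when v_n ≠ 0 and ω̂_n = 0 when v_n = 0. -/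
open scoped ENNReal

noncomputable section

/-- The decoupled functional `I_q(v, ω) = ‖v − ω‖²_{ℓ²} + ∑_n α_n |ω_n|^q`. -/
def Ifun (α : ℕ → ℝ) (q : ℝ) (v ω : lp (fun _ : ℕ => ℝ) 2) : ℝ≥0∞ :=
  ENNReal.ofReal (‖v - ω‖ ^ 2) + wpen α q (fun n => (ω : ∀ _ : ℕ, ℝ) n)

def pen (q u : ℝ) : ℝ := if u = 0 then 0 else |u| ^ q

lemma pen_nonneg (q u : ℝ) : 0 ≤ pen q u := by
  unfold pen; split
  · exact le_refl 0
  · exact Real.rpow_nonneg (abs_nonneg u) q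

/-- lower bound: min(x², α|x|^q) ≤ 4·((x−w)² + α·pen q w) -/

lemma lower_bound {q α : ℝ} (hq0 : 0 < q) (hq2 : q ≤ 2) (hα : 0 ≤ α) (x w : ℝ) :
    min (x ^ 2) (α * |x| ^ q) ≤ 4 * ((x - w) ^ 2 + α * pen q w) := by
  have hpw : 0 ≤ pen q w := pen_nonneg q w
  rcases eq_or_ne x 0 with hx | hx
  · subst hx
    have : |(0:ℝ)| ^ q = 0 := by rw [abs_zero, Real.zero_rpow hq0.ne']
    rw [this, mul_zero]
    rw [show (0:ℝ)^2 = 0 by norm_num, min_self]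
    positivity
  · rcases le_or_gt |w| (|x| / 2) with hw | hw
    · -- (x−w)² ≥ x²/4
      have h1 : |x| - |w| ≤ |x - w| := abs_sub_abs_le_abs_sub x w
      have h2 : x ^ 2 / 4 ≤ (x - w) ^ 2 := by
        nlinarith [sq_abs (x - w), sq_abs x, abs_nonneg (x - w), abs_nonneg x]
      calc min (x ^ 2) (α * |x| ^ q) ≤ x ^ 2 := min_le_left _ _
        _ ≤ 4 * ((x - w) ^ 2 + α * pen q w) := by nlinarith [mul_nonneg hα hpw]
    · -- |w| > |x|/2, w ≠ 0, penalty large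
      have hxpos : 0 < |x| := abs_pos.2 hx
      have hw0 : w ≠ 0 := by
        intro h; rw [h, abs_zero] at hw; linarith
      have hpw' : pen q w = |w| ^ q := by unfold pen; rw [if_neg hw0]
      have hle : (|x| / 2) ^ q ≤ |w| ^ q :=
        Real.rpow_le_rpow (by positivity) hw.le hq0.le
      have hsplit : (|x| / 2) ^ q = |x| ^ q * (1 / 2 : ℝ) ^ q := by
        rw [← Real.mul_rpow (abs_nonneg x) (by norm_num)]
        ring_nf
      have hhalf : (1 / 4 : ℝ) ≤ (1 / 2 : ℝ) ^ q := by
        have : ((1:ℝ) / 2) ^ (2:ℝ) ≤ (1 / 2 : ℝ) ^ q :=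
          Real.rpow_le_rpow_of_exponent_ge (by norm_num) (by norm_num) hq2
        rw [show ((2:ℝ)) = ((2:ℕ):ℝ) by norm_num, Real.rpow_natCast] at this
        norm_num at this
        linarith
      have hxq : 0 ≤ |x| ^ q := Real.rpow_nonneg (abs_nonneg x) q
      have key : α * |x| ^ q ≤ 4 * (α * pen q w) := by
        rw [hpw']
        have h3 : |x| ^ q * (1/4 : ℝ) ≤ |w| ^ q := by
          calc |x| ^ q * (1/4 : ℝ) ≤ |x| ^ q * (1/2 : ℝ) ^ q := by
                exact mul_le_mul_of_nonneg_left hhalf hxq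
            _ = (|x| / 2) ^ q := hsplit.symm
            _ ≤ |w| ^ q := hle
        nlinarith [mul_le_mul_of_nonneg_left h3 hα]
      calc min (x ^ 2) (α * |x| ^ q) ≤ α * |x| ^ q := min_le_right _ _
        _ ≤ 4 * (α * pen q w) := key
        _ ≤ 4 * ((x - w) ^ 2 + α * pen q w) := by nlinarith [sq_nonneg (x - w)]


lemma upper_bound (ϱ : ℝ → ℝ → ℝ) {ρ : ℝ} (hρ : 1 / 2 ≤ ρ)
    {C₁ C₂ D : ℝ} (hC₁ : 0 < C₁) (hC₂ : 0 < C₂) (hD : 0 < D)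
    (hrule₁ : ∀ (x a : ℝ), 0 ≤ a → |x - ϱ x a| ≤ C₁ * min |x| a)
    (hrule₂ : ∀ (x a : ℝ), 0 < a → |x| ≤ D * a → |ϱ x a| ≤ C₂ * |x| * (|x| / a) ^ ρ)
    {α q : ℝ} (hα : 0 ≤ α) (hq1 : 1 / ρ ≤ q) (hq2 : q ≤ 2) (x : ℝ)
    (w : ℝ) (hw : w = if x = 0 then 0 else ϱ x (α * |x| ^ (q - 1))) :
    (x - w) ^ 2 + α * pen q w ≤
      (C₁ ^ 2 + (max 1 C₂) ^ (2:ℝ) * (max 1 D) ^ (2 * ρ) + (1 + C₁) ^ (2:ℝ) / min 1 D) *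
        min (x ^ 2) (α * |x| ^ q) := by
  have hρ0 : (0:ℝ) < ρ := by linarith
  have hq0 : 0 < q := lt_of_lt_of_le (by positivity) hq1
  have hMC : (0:ℝ) ≤ (max 1 C₂) ^ (2:ℝ) := Real.rpow_nonneg (by positivity) _
  have hMD : (0:ℝ) ≤ (max 1 D) ^ (2 * ρ) := Real.rpow_nonneg (by positivity) _
  have hMCn : (0:ℝ) ≤ (1 + C₁) ^ (2:ℝ) := Real.rpow_nonneg (by positivity) _
  have hmD : (0:ℝ) < min 1 D := lt_min one_pos hD
  have hK2 : (0:ℝ) ≤ (max 1 C₂) ^ (2:ℝ) * (max 1 D) ^ (2 * ρ) := mul_nonneg hMC hMD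
  have hK3 : (0:ℝ) ≤ (1 + C₁) ^ (2:ℝ) / min 1 D := div_nonneg hMCn hmD.le
  rcases eq_or_ne x 0 with hx | hx
  · subst hx
    rw [if_pos rfl] at hw; subst hw
    have hp0 : pen q 0 = 0 := by unfold pen; rw [if_pos rfl]
    rw [hp0, mul_zero, add_zero, sub_zero]
    have hmin : min ((0:ℝ) ^ 2) (α * |(0:ℝ)| ^ q) = 0 := by
      rw [abs_zero, Real.zero_rpow hq0.ne', mul_zero]
      norm_num
    rw [hmin, mul_zero]
    norm_num
  · rw [if_neg hx] at hw
    set a : ℝ := α * |x| ^ (q - 1) with ha_def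
    have hxpos : 0 < |x| := abs_pos.2 hx
    have ha : 0 ≤ a := by
      have := Real.rpow_nonneg (abs_nonneg x) (q - 1); positivity
    have hkey : α * |x| ^ q = a * |x| := by
      rw [ha_def, mul_assoc]
      congr 1
      have h := Real.rpow_add hxpos (q - 1) 1
      rw [Real.rpow_one] at h
      rw [← h]
      norm_num
    have haxn : 0 ≤ a * |x| := mul_nonneg ha (abs_nonneg x)
    have hmin_nonneg : 0 ≤ min (x ^ 2) (α * |x| ^ q) := by
      rw [hkey]; exact le_min (sq_nonneg x) haxn
    have h1 : |x - w| ≤ C₁ * min |x| a := by rw [hw]; exact hrule₁ x a ha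
    have hmxa : 0 ≤ min |x| a := le_min (abs_nonneg x) ha
    -- Part A
    have hA : (x - w) ^ 2 ≤ C₁ ^ 2 * min (x ^ 2) (α * |x| ^ q) := by
      rw [hkey]
      have hsq : (x - w) ^ 2 ≤ (C₁ * min |x| a) ^ 2 := by
        rw [← sq_abs (x - w)]
        exact pow_le_pow_left₀ (abs_nonneg _) h1 2
      have hm1 : (min |x| a) ^ 2 ≤ x ^ 2 := by
        rw [← sq_abs x]
        exact pow_le_pow_left₀ hmxa (min_le_left _ _) 2
      have hm2 : (min |x| a) ^ 2 ≤ a * |x| := by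
        rw [sq]
        exact mul_le_mul (min_le_right _ _) (min_le_left _ _) hmxa ha
      calc (x - w) ^ 2 ≤ (C₁ * min |x| a) ^ 2 := hsq
        _ = C₁ ^ 2 * (min |x| a) ^ 2 := by ring
        _ ≤ C₁ ^ 2 * min (x ^ 2) (a * |x|) :=
            mul_le_mul_of_nonneg_left (le_min hm1 hm2) (by positivity)
    -- Part B
    have hB : α * pen q w ≤
        ((max 1 C₂) ^ (2:ℝ) * (max 1 D) ^ (2 * ρ) + (1 + C₁) ^ (2:ℝ) / min 1 D) *
          min (x ^ 2) (α * |x| ^ q) := by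
      rcases eq_or_ne w 0 with hw0 | hw0
      · rw [hw0]
        have hp0 : pen q 0 = 0 := by unfold pen; rw [if_pos rfl]
        rw [hp0, mul_zero]
        exact mul_nonneg (by linarith) hmin_nonneg
      have hpw : pen q w = |w| ^ q := by unfold pen; rw [if_neg hw0]
      rw [hpw, hkey]
      rcases le_or_gt |x| (D * a) with hxa | hxa
      · -- small-signal case
        have ha0 : 0 < a := by
          rcases ha.lt_or_eq with h | h
          · exact h
          · exfalso; rw [← h, mul_zero] at hxa; linarith
        set t : ℝ := |x| / a with ht_def
        have ht0 : 0 < t := div_pos hxpos ha0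
        have htD : t ≤ D := (div_le_iff₀ ha0).2 (by linarith)
        have h2 : |w| ≤ C₂ * |x| * t ^ ρ := by rw [hw]; exact hrule₂ x a ha0 hxa
        have hρq1 : 1 ≤ ρ * q := by
          have := mul_le_mul_of_nonneg_left hq1 hρ0.le
          rw [mul_one_div, div_self hρ0.ne'] at this; linarith
        have hρq2 : ρ * q ≤ 2 * ρ := by nlinarith
        have hwq : |w| ^ q ≤ C₂ ^ q * |x| ^ q * t ^ (ρ * q) := by
          have hrpow : |w| ^ q ≤ (C₂ * |x| * t ^ ρ) ^ q :=
            Real.rpow_le_rpow (abs_nonneg w) h2 hq0.le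
          have hexp : (C₂ * |x| * t ^ ρ) ^ q = C₂ ^ q * |x| ^ q * t ^ (ρ * q) := by
            rw [Real.mul_rpow (by positivity) (Real.rpow_nonneg ht0.le ρ),
              Real.mul_rpow hC₂.le (abs_nonneg x), ← Real.rpow_mul ht0.le]
          rw [hexp] at hrpow; exact hrpow
        have htqn : 0 ≤ t ^ (ρ * q) := Real.rpow_nonneg ht0.le _
        have hC2q : C₂ ^ q ≤ (max 1 C₂) ^ (2:ℝ) :=
          le_trans (Real.rpow_le_rpow hC₂.le (le_max_right 1 C₂) hq0.le)
            (Real.rpow_le_rpow_of_exponent_le (le_max_left 1 C₂) hq2)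
        have hone : (1:ℝ) ≤ (max 1 D) ^ (2 * ρ) := by
          have h1' : ((max 1 D):ℝ) ^ (0:ℝ) ≤ (max 1 D) ^ (2 * ρ) :=
            Real.rpow_le_rpow_of_exponent_le (le_max_left 1 D) (by positivity)
          rwa [Real.rpow_zero] at h1'
        have hstart : α * |w| ^ q ≤ C₂ ^ q * (a * |x|) * t ^ (ρ * q) := by
          calc α * |w| ^ q ≤ α * (C₂ ^ q * |x| ^ q * t ^ (ρ * q)) :=
              mul_le_mul_of_nonneg_left hwq hα
            _ = C₂ ^ q * (α * |x| ^ q) * t ^ (ρ * q) := by ring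
            _ = C₂ ^ q * (a * |x|) * t ^ (ρ * q) := by rw [hkey]
        have hC2qn : 0 ≤ C₂ ^ q := Real.rpow_nonneg hC₂.le _
        have hta : t * a = |x| := by rw [ht_def]; field_simp
        have hx2 : t * (a * |x|) = x ^ 2 := by
          calc t * (a * |x|) = (t * a) * |x| := by ring
            _ = |x| * |x| := by rw [hta]
            _ = x ^ 2 := by rw [← sq_abs x]; ring
        rcases le_or_gt t 1 with ht1 | ht1
        · have htle : t ^ (ρ * q) ≤ t := by
            have := Real.rpow_le_rpow_of_exponent_ge ht0 ht1 hρq1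
            rwa [Real.rpow_one] at this
          have hxle : x ^ 2 ≤ a * |x| := by
            calc x ^ 2 = t * (a * |x|) := hx2.symm
              _ ≤ 1 * (a * |x|) := mul_le_mul_of_nonneg_right ht1 haxn
              _ = a * |x| := one_mul _
          rw [min_eq_left hxle]
          calc α * |w| ^ q ≤ C₂ ^ q * (a * |x|) * t ^ (ρ * q) := hstart
            _ ≤ (max 1 C₂) ^ (2:ℝ) * (a * |x|) * t :=
                mul_le_mul (mul_le_mul_of_nonneg_right hC2q haxn) htle htqn
                  (mul_nonneg hMC haxn)
            _ = (max 1 C₂) ^ (2:ℝ) * x ^ 2 := by rw [← hx2]; ring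
            _ ≤ (max 1 C₂) ^ (2:ℝ) * (max 1 D) ^ (2 * ρ) * x ^ 2 := by
                apply mul_le_mul_of_nonneg_right _ (sq_nonneg x)
                exact le_mul_of_one_le_right hMC hone
            _ ≤ ((max 1 C₂) ^ (2:ℝ) * (max 1 D) ^ (2 * ρ) +
                  (1 + C₁) ^ (2:ℝ) / min 1 D) * x ^ 2 :=
                mul_le_mul_of_nonneg_right (le_add_of_nonneg_right hK3) (sq_nonneg x)
        · have htle : t ^ (ρ * q) ≤ (max 1 D) ^ (2 * ρ) := by
            calc t ^ (ρ * q) ≤ ((max 1 D):ℝ) ^ (ρ * q) :=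
                Real.rpow_le_rpow ht0.le (le_trans htD (le_max_right 1 D))
                  (by positivity)
              _ ≤ (max 1 D) ^ (2 * ρ) :=
                Real.rpow_le_rpow_of_exponent_le (le_max_left 1 D) hρq2
          have hxle : a * |x| ≤ x ^ 2 := by
            calc a * |x| = 1 * (a * |x|) := (one_mul _).symm
              _ ≤ t * (a * |x|) := mul_le_mul_of_nonneg_right ht1.le haxn
              _ = x ^ 2 := hx2
          rw [min_eq_right hxle]
          calc α * |w| ^ q ≤ C₂ ^ q * (a * |x|) * t ^ (ρ * q) := hstart
            _ ≤ (max 1 C₂) ^ (2:ℝ) * (a * |x|) * (max 1 D) ^ (2 * ρ) :=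
                mul_le_mul (mul_le_mul_of_nonneg_right hC2q haxn) htle htqn
                  (mul_nonneg hMC haxn)
            _ = (max 1 C₂) ^ (2:ℝ) * (max 1 D) ^ (2 * ρ) * (a * |x|) := by ring
            _ ≤ ((max 1 C₂) ^ (2:ℝ) * (max 1 D) ^ (2 * ρ) +
                  (1 + C₁) ^ (2:ℝ) / min 1 D) * (a * |x|) :=
                mul_le_mul_of_nonneg_right (le_add_of_nonneg_right hK3) haxn
      · -- large-signal case
        have hwx : |w| ≤ (1 + C₁) * |x| := by
          have h3 : |w| - |x| ≤ |w - x| := by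
            have := abs_sub_abs_le_abs_sub w x; linarith
          have h4 : |w - x| = |x - w| := abs_sub_comm w x
          have h5 : C₁ * min |x| a ≤ C₁ * |x| :=
            mul_le_mul_of_nonneg_left (min_le_left _ _) hC₁.le
          nlinarith
        have hwq : |w| ^ q ≤ (1 + C₁) ^ (2:ℝ) * |x| ^ q := by
          have hrpow : |w| ^ q ≤ ((1 + C₁) * |x|) ^ q :=
            Real.rpow_le_rpow (abs_nonneg w) hwx hq0.le
          have hmulr : ((1 + C₁) * |x|) ^ q = (1 + C₁) ^ q * |x| ^ q :=
            Real.mul_rpow (by positivity) (abs_nonneg x)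
          have hc : (1 + C₁) ^ (q:ℝ) ≤ (1 + C₁) ^ (2:ℝ) :=
            Real.rpow_le_rpow_of_exponent_le (by linarith) hq2
          have hxq : 0 ≤ |x| ^ q := Real.rpow_nonneg (abs_nonneg x) q
          calc |w| ^ q ≤ (1 + C₁) ^ (q:ℝ) * |x| ^ q := by rw [← hmulr]; exact hrpow
            _ ≤ (1 + C₁) ^ (2:ℝ) * |x| ^ q := mul_le_mul_of_nonneg_right hc hxq
        have hax : min 1 D * (a * |x|) ≤ min (x ^ 2) (a * |x|) := by
          apply le_min
          · calc min 1 D * (a * |x|) ≤ D * (a * |x|) :=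
                mul_le_mul_of_nonneg_right (min_le_right _ _) haxn
              _ = (D * a) * |x| := by ring
              _ ≤ |x| * |x| := mul_le_mul_of_nonneg_right hxa.le (abs_nonneg x)
              _ = x ^ 2 := by rw [← sq_abs x]; ring
          · calc min 1 D * (a * |x|) ≤ 1 * (a * |x|) :=
                mul_le_mul_of_nonneg_right (min_le_left _ _) haxn
              _ = a * |x| := one_mul _
        have step : α * |w| ^ q ≤ (1 + C₁) ^ (2:ℝ) * (a * |x|) := by
          calc α * |w| ^ q ≤ α * ((1 + C₁) ^ (2:ℝ) * |x| ^ q) :=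
              mul_le_mul_of_nonneg_left hwq hα
            _ = (1 + C₁) ^ (2:ℝ) * (α * |x| ^ q) := by ring
            _ = (1 + C₁) ^ (2:ℝ) * (a * |x|) := by rw [hkey]
        have step2 : a * |x| ≤ min (x ^ 2) (a * |x|) / min 1 D := by
          rw [le_div_iff₀ hmD]
          calc a * |x| * min 1 D = min 1 D * (a * |x|) := by ring
            _ ≤ min (x ^ 2) (a * |x|) := hax
        calc α * |w| ^ q ≤ (1 + C₁) ^ (2:ℝ) * (a * |x|) := step
          _ ≤ (1 + C₁) ^ (2:ℝ) * (min (x ^ 2) (a * |x|) / min 1 D) :=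
              mul_le_mul_of_nonneg_left step2 hMCn
          _ = (1 + C₁) ^ (2:ℝ) / min 1 D * min (x ^ 2) (a * |x|) := by ring
          _ ≤ ((max 1 C₂) ^ (2:ℝ) * (max 1 D) ^ (2 * ρ) +
                (1 + C₁) ^ (2:ℝ) / min 1 D) * min (x ^ 2) (a * |x|) := by
              apply mul_le_mul_of_nonneg_right _ (hkey ▸ hmin_nonneg)
              linarith
    calc (x - w) ^ 2 + α * pen q w
        ≤ C₁ ^ 2 * min (x ^ 2) (α * |x| ^ q) +
          ((max 1 C₂) ^ (2:ℝ) * (max 1 D) ^ (2 * ρ) + (1 + C₁) ^ (2:ℝ) / min 1 D) *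
            min (x ^ 2) (α * |x| ^ q) := add_le_add hA hB
      _ = (C₁ ^ 2 + (max 1 C₂) ^ (2:ℝ) * (max 1 D) ^ (2 * ρ) +
            (1 + C₁) ^ (2:ℝ) / min 1 D) * min (x ^ 2) (α * |x| ^ q) := by ring

lemma two_toReal : ((2 : ℝ≥0∞)).toReal = 2 := by norm_num


lemma Ifun_eq_tsum (α : ℕ → ℝ) (q : ℝ) (v ω : lp (fun _ : ℕ => ℝ) 2) :
    Ifun α q v ω = ∑' n, (ENNReal.ofReal (((v : ∀ _ : ℕ, ℝ) n - (ω : ∀ _ : ℕ, ℝ) n) ^ 2) +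
      ENNReal.ofReal (α n * pen q ((ω : ∀ _ : ℕ, ℝ) n))) := by
  have hp : 0 < ((2 : ℝ≥0∞)).toReal := by rw [two_toReal]; norm_num
  have hnorm : ‖v - ω‖ ^ 2 =
      ∑' n, (((v : ∀ _ : ℕ, ℝ) n - (ω : ∀ _ : ℕ, ℝ) n) ^ 2) := by
    have h1 : ‖v - ω‖ ^ (((2 : ℝ≥0∞)).toReal) =
        ∑' n, ‖((v - ω : lp (fun _ : ℕ => ℝ) 2) : ∀ _ : ℕ, ℝ) n‖ ^ (((2 : ℝ≥0∞)).toReal) :=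
      lp.norm_rpow_eq_tsum hp (v - ω)
    rw [two_toReal] at h1
    have h2 : ∀ n : ℕ, ‖((v - ω : lp (fun _ : ℕ => ℝ) 2) : ∀ _ : ℕ, ℝ) n‖ ^ (2:ℝ) =
        ((v : ∀ _ : ℕ, ℝ) n - (ω : ∀ _ : ℕ, ℝ) n) ^ 2 := by
      intro n
      rw [lp.coeFn_sub, Pi.sub_apply, Real.norm_eq_abs,
        show ((2:ℝ)) = ((2:ℕ):ℝ) by norm_num, Real.rpow_natCast, sq_abs]
    rw [← Real.rpow_natCast ‖v - ω‖ 2]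
    push_cast
    rw [h1]
    exact tsum_congr h2
  have hsummable : Summable
      (fun n => (((v : ∀ _ : ℕ, ℝ) n - (ω : ∀ _ : ℕ, ℝ) n) ^ 2)) := by
    have := (lp.memℓp (v - ω)).summable hp
    rw [two_toReal] at this
    apply this.congr
    intro n
    rw [lp.coeFn_sub, Pi.sub_apply, Real.norm_eq_abs,
      show ((2:ℝ)) = ((2:ℕ):ℝ) by norm_num, Real.rpow_natCast, sq_abs]
  have hofReal : ENNReal.ofReal (‖v - ω‖ ^ 2) =
      ∑' n, ENNReal.ofReal (((v : ∀ _ : ℕ, ℝ) n - (ω : ∀ _ : ℕ, ℝ) n) ^ 2) := by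
    rw [hnorm]
    exact ENNReal.ofReal_tsum_of_nonneg (fun n => sq_nonneg _) hsummable
  have hwpen : wpen α q (fun n => (ω : ∀ _ : ℕ, ℝ) n) =
      ∑' n, ENNReal.ofReal (α n * pen q ((ω : ∀ _ : ℕ, ℝ) n)) := rfl
  rw [Ifun, hofReal, hwpen, ENNReal.tsum_add]

theorem shrinkage_minimizes_decoupled_functional
    -- a shrinkage rule ϱ with exponent ρ ∈ [1/2, ∞)
    (ϱ : ℝ → ℝ → ℝ) (ρ : ℝ) (hρ : 1 / 2 ≤ ρ)
    (C₁ C₂ D : ℝ) (hC₁ : 0 < C₁) (hC₂ : 0 < C₂) (hD : 0 < D)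
    (hrule₁ : ∀ (x a : ℝ), 0 ≤ a → |x - ϱ x a| ≤ C₁ * min |x| a)
    (hrule₂ : ∀ (x a : ℝ), 0 < a → |x| ≤ D * a → |ϱ x a| ≤ C₂ * |x| * (|x| / a) ^ ρ) :
    -- there is a constant C > 0, depending only on C₁, C₂, D, ρ, such that
    ∃ C > (0 : ℝ), ∀ α : ℕ → ℝ, (∀ n, 0 ≤ α n) →
      ∀ q ∈ Set.Icc (1 / ρ) (2 : ℝ), ∀ v : lp (fun _ : ℕ => ℝ) 2,
        ∃ what : lp (fun _ : ℕ => ℝ) 2,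
          -- ω̂_n = ϱ(v_n, α_n |v_n|^(q−1)) for v_n ≠ 0, and ω̂_n = 0 for v_n = 0
          (∀ n : ℕ, (what : ∀ _ : ℕ, ℝ) n =
            if (v : ∀ _ : ℕ, ℝ) n = 0 then 0
            else ϱ ((v : ∀ _ : ℕ, ℝ) n) (α n * |(v : ∀ _ : ℕ, ℝ) n| ^ (q - 1))) ∧
          ∀ ω : lp (fun _ : ℕ => ℝ) 2,
            Ifun α q v what ≤ ENNReal.ofReal C * Ifun α q v ω := by
  set K : ℝ := C₁ ^ 2 + (max 1 C₂) ^ (2:ℝ) * (max 1 D) ^ (2 * ρ) +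
    (1 + C₁) ^ (2:ℝ) / min 1 D with hK_def
  have hρ0 : (0:ℝ) < ρ := by linarith
  have hKpos : 0 < K := by
    have h1 : (0:ℝ) ≤ (max 1 C₂) ^ (2:ℝ) * (max 1 D) ^ (2 * ρ) :=
      mul_nonneg (Real.rpow_nonneg (by positivity) _) (Real.rpow_nonneg (by positivity) _)
    have h2 : (0:ℝ) ≤ (1 + C₁) ^ (2:ℝ) / min 1 D :=
      div_nonneg (Real.rpow_nonneg (by positivity) _) (le_min zero_le_one hD.le)
    have h3 : (0:ℝ) < C₁ ^ 2 := by positivity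
    rw [hK_def]
    linarith
  refine ⟨4 * K, by positivity, ?_⟩
  intro α hα q hq v
  obtain ⟨hq1, hq2⟩ := hq
  have hq0 : 0 < q := lt_of_lt_of_le (by positivity) hq1
  -- the candidate sequence
  set f : ℕ → ℝ := fun n =>
    if (v : ∀ _ : ℕ, ℝ) n = 0 then 0
    else ϱ ((v : ∀ _ : ℕ, ℝ) n) (α n * |(v : ∀ _ : ℕ, ℝ) n| ^ (q - 1)) with hf_def
  -- |f n| ≤ (1 + C₁) |v n|
  have hfb : ∀ n, ‖f n‖ ≤ (1 + C₁) * ‖(v : ∀ _ : ℕ, ℝ) n‖ := by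
    intro n
    set x := (v : ∀ _ : ℕ, ℝ) n
    rw [hf_def]
    simp only [Real.norm_eq_abs]
    rcases eq_or_ne x 0 with hx | hx
    · rw [if_pos hx, hx]
      simp
    · rw [if_neg hx]
      set a : ℝ := α n * |x| ^ (q - 1)
      have ha : 0 ≤ a := mul_nonneg (hα n) (Real.rpow_nonneg (abs_nonneg x) _)
      have h1 := hrule₁ x a ha
      have h3 : |ϱ x a| - |x| ≤ |ϱ x a - x| := by
        have := abs_sub_abs_le_abs_sub (ϱ x a) x; linarith
      have h4 : |ϱ x a - x| = |x - ϱ x a| := abs_sub_comm _ _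
      have h5 : C₁ * min |x| a ≤ C₁ * |x| :=
        mul_le_mul_of_nonneg_left (min_le_left _ _) hC₁.le
      nlinarith
  -- membership in ℓ²
  have hp : 0 < ((2 : ℝ≥0∞)).toReal := by norm_num
  have hmem : Memℓp f 2 := by
    apply memℓp_gen
    have hv2 : Summable (fun n => ‖(v : ∀ _ : ℕ, ℝ) n‖ ^ ((2:ℝ≥0∞)).toReal) :=
      (lp.memℓp v).summable hp
    have hv2' : Summable (fun n => (1 + C₁) ^ ((2:ℝ≥0∞)).toReal *
        ‖(v : ∀ _ : ℕ, ℝ) n‖ ^ ((2:ℝ≥0∞)).toReal) := hv2.mul_left _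
    apply hv2'.of_nonneg_of_le
    · intro n; exact Real.rpow_nonneg (norm_nonneg _) _
    · intro n
      calc ‖f n‖ ^ ((2:ℝ≥0∞)).toReal
          ≤ ((1 + C₁) * ‖(v : ∀ _ : ℕ, ℝ) n‖) ^ ((2:ℝ≥0∞)).toReal :=
            Real.rpow_le_rpow (norm_nonneg _) (hfb n) (by norm_num)
        _ = (1 + C₁) ^ ((2:ℝ≥0∞)).toReal *
            ‖(v : ∀ _ : ℕ, ℝ) n‖ ^ ((2:ℝ≥0∞)).toReal :=
            Real.mul_rpow (by positivity) (norm_nonneg _)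
  refine ⟨⟨f, hmem⟩, fun n => rfl, ?_⟩
  intro ω
  rw [Ifun_eq_tsum, Ifun_eq_tsum]
  have hcoe : ∀ n, ((⟨f, hmem⟩ : lp (fun _ : ℕ => ℝ) 2) : ∀ _ : ℕ, ℝ) n = f n :=
    fun n => rfl
  -- pointwise bound
  have hpt : ∀ n : ℕ,
      ENNReal.ofReal (((v : ∀ _ : ℕ, ℝ) n - f n) ^ 2) +
        ENNReal.ofReal (α n * pen q (f n)) ≤
      ENNReal.ofReal (4 * K) *
        (ENNReal.ofReal (((v : ∀ _ : ℕ, ℝ) n - (ω : ∀ _ : ℕ, ℝ) n) ^ 2) +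
          ENNReal.ofReal (α n * pen q ((ω : ∀ _ : ℕ, ℝ) n))) := by
    intro n
    set x := (v : ∀ _ : ℕ, ℝ) n
    set w := (ω : ∀ _ : ℕ, ℝ) n
    have hreal : (x - f n) ^ 2 + α n * pen q (f n) ≤
        4 * K * ((x - w) ^ 2 + α n * pen q w) := by
      have hub := upper_bound ϱ hρ hC₁ hC₂ hD hrule₁ hrule₂ (hα n) hq1 hq2 x (f n)
        (by rw [hf_def])
      have hlb := lower_bound hq0 hq2 (hα n) x w
      have hmn : 0 ≤ min (x ^ 2) (α n * |x| ^ q) :=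
        le_min (sq_nonneg x) (mul_nonneg (hα n) (Real.rpow_nonneg (abs_nonneg x) _))
      calc (x - f n) ^ 2 + α n * pen q (f n)
          ≤ K * min (x ^ 2) (α n * |x| ^ q) := hub
        _ ≤ K * (4 * ((x - w) ^ 2 + α n * pen q w)) :=
            mul_le_mul_of_nonneg_left hlb hKpos.le
        _ = 4 * K * ((x - w) ^ 2 + α n * pen q w) := by ring
    have hl1 : 0 ≤ (x - f n) ^ 2 := sq_nonneg _
    have hl2 : 0 ≤ α n * pen q (f n) := mul_nonneg (hα n) (pen_nonneg _ _)
    have hr1 : 0 ≤ (x - w) ^ 2 := sq_nonneg _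
    have hr2 : 0 ≤ α n * pen q w := mul_nonneg (hα n) (pen_nonneg _ _)
    rw [← ENNReal.ofReal_add hl1 hl2, ← ENNReal.ofReal_add hr1 hr2,
      ← ENNReal.ofReal_mul (by positivity)]
    exact ENNReal.ofReal_le_ofReal hreal
  calc (∑' n, (ENNReal.ofReal (((v : ∀ _ : ℕ, ℝ) n -
        ((⟨f, hmem⟩ : lp (fun _ : ℕ => ℝ) 2) : ∀ _ : ℕ, ℝ) n) ^ 2) +
        ENNReal.ofReal (α n * pen q (((⟨f, hmem⟩ : lp (fun _ : ℕ => ℝ) 2) : ∀ _ : ℕ, ℝ) n))))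
      = ∑' n, (ENNReal.ofReal (((v : ∀ _ : ℕ, ℝ) n - f n) ^ 2) +
        ENNReal.ofReal (α n * pen q (f n))) := by
        exact tsum_congr fun n => by rw [hcoe]
    _ ≤ ∑' n, (ENNReal.ofReal (4 * K) *
        (ENNReal.ofReal (((v : ∀ _ : ℕ, ℝ) n - (ω : ∀ _ : ℕ, ℝ) n) ^ 2) +
          ENNReal.ofReal (α n * pen q ((ω : ∀ _ : ℕ, ℝ) n)))) :=
        ENNReal.tsum_le_tsum hpt
    _ = ENNReal.ofReal (4 * K) *
        ∑' n, (ENNReal.ofReal (((v : ∀ _ : ℕ, ℝ) n - (ω : ∀ _ : ℕ, ℝ) n) ^ 2) +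
          ENNReal.ofReal (α n * pen q ((ω : ∀ _ : ℕ, ℝ) n))) := ENNReal.tsum_mul_left
end
end
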